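/- arXiv:math/0506169 — 5 statements merged into one kernel-verified Lean document; each statement's English description precedes it below -/
import Mathlib

section
/- Let 0<q<1 be a real number, let r≥1 be an integer, let f≥1 be an integer and let χ be a Dirichlet character modulo f with values in ℂ. Then for every complex number s, the family indexed by r-tuples (n₁,...,n_r) of positive integers with terms χ(n₁+⋯+n_r)·q^{n₁+⋯+n_r}·[n₁+⋯+n_r]_q^{−s} is absolutely summable; in particular the multiple Dirichlet q-L-series L_q^r(s,χ) converges for every s ∈ ℂ. -/
/-!
For `m ≥ 1` the `q`-integer `[m]_q = 1 + q + ⋯ + q^{m-1}` lies in `[1, 1/(1-q)]`, so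
`‖[m]_q^{-s}‖ ≤ (1-q)^{-|Re s|}` uniformly in `m`. Each term of the series is therefore
bounded by a constant times `q^{n₁+⋯+n_r} = q^{n₁} ⋯ q^{n_r}`, whose sum over all `r`-tuples
is the `r`-th power of a geometric series.
-/

/-- The `q`-analogue `[x]_q = (1 - q^x)/(1 - q)` of a real number `x`. -/
noncomputable def qNum (q x : ℝ) : ℝ := (1 - q ^ x) / (1 - q)

open Finset

theorem summable_pi_prod_of_nonneg {ι : Type*} [Fintype ι] {α : ι → Type*}
    {g : ∀ i, α i → ℝ} (hg0 : ∀ i, 0 ≤ g i) (hg : ∀ i, Summable (g i)) :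
    Summable fun x : ∀ i, α i => ∏ i, g i (x i) := by
  classical
  refine summable_of_sum_le (c := ∏ i, ∑' a, g i a)
    (fun x => prod_nonneg fun i _ => hg0 i (x i)) fun u => ?_
  calc ∑ x ∈ u, ∏ i, g i (x i)
      ≤ ∑ x ∈ Fintype.piFinset fun i => u.image (· i), ∏ i, g i (x i) :=
        sum_le_sum_of_subset_of_nonneg
          (fun x hx => Fintype.mem_piFinset.2 fun i => mem_image_of_mem _ hx)
          fun x _ _ => prod_nonneg fun i _ => hg0 i (x i)
    _ = ∏ i, ∑ a ∈ u.image (· i), g i a := (prod_univ_sum _ _).symm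
    _ ≤ ∏ i, ∑' a, g i a :=
        prod_le_prod (fun i _ => sum_nonneg fun a _ => hg0 i a)
          fun i _ => (hg i).sum_le_tsum _ fun a _ => hg0 i a

theorem summable_pow_sum_pnat {q : ℝ} (hq0 : 0 ≤ q) (hq1 : q < 1) (ι : Type*) [Fintype ι] :
    Summable fun n : ι → ℕ+ => q ^ ∑ i, (n i : ℕ) := by
  have hgeom : Summable fun k : ℕ+ => q ^ (k : ℕ) :=
    (summable_geometric_of_lt_one hq0 hq1).comp_injective PNat.coe_injective
  simpa only [prod_pow_eq_pow_sum] using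
    summable_pi_prod_of_nonneg (fun _ _ => pow_nonneg hq0 _) fun (_ : ι) => hgeom

theorem Real.rpow_le_rpow_abs_of_mem_Icc {x b : ℝ} (hx : x ∈ Set.Icc 1 b) (t : ℝ) :
    x ^ t ≤ b ^ |t| := by
  rcases le_or_gt 0 t with ht | ht
  · calc x ^ t ≤ b ^ t := Real.rpow_le_rpow (by linarith [hx.1]) hx.2 ht
      _ ≤ b ^ |t| := Real.rpow_le_rpow_of_exponent_le (hx.1.trans hx.2) (le_abs_self t)
  · calc x ^ t ≤ 1 := Real.rpow_le_one_of_one_le_of_nonpos hx.1 ht.le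
      _ ≤ b ^ |t| := Real.one_le_rpow (hx.1.trans hx.2) (abs_nonneg t)

theorem qNum_natCast_mem_Icc {q : ℝ} (hq0 : 0 < q) (hq1 : q < 1) {m : ℕ} (hm : 1 ≤ m) :
    qNum q m ∈ Set.Icc 1 (1 - q)⁻¹ := by
  have h1q : 0 < 1 - q := sub_pos.2 hq1
  have hqm : q ^ m ≤ q := pow_le_of_le_one hq0.le hq1.le (by omega)
  rw [qNum, Real.rpow_natCast, Set.mem_Icc, le_div_iff₀ h1q, div_le_iff₀ h1q,
    inv_mul_cancel₀ h1q.ne']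
  exact ⟨by linarith, by linarith [pow_pos hq0 m]⟩

theorem norm_qNum_natCast_cpow_le {q : ℝ} (hq0 : 0 < q) (hq1 : q < 1) {m : ℕ} (hm : 1 ≤ m)
    (s : ℂ) :
    ‖((qNum q m : ℝ) : ℂ) ^ s‖ ≤ (1 - q)⁻¹ ^ |s.re| := by
  have hmem := qNum_natCast_mem_Icc hq0 hq1 hm
  rw [Complex.norm_cpow_eq_rpow_re_of_pos (zero_lt_one.trans_le hmem.1)]
  exact Real.rpow_le_rpow_abs_of_mem_Icc hmem s.re

theorem multiple_q_L_series_summable_general (q : ℝ) (hq0 : 0 < q) (hq1 : q < 1)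
    (r f : ℕ) (hr : 1 ≤ r) (χ : DirichletCharacter ℂ f) (s : ℂ) :
    Summable (fun n : Fin r → ℕ+ =>
      ‖χ (((∑ i, (n i : ℕ)) : ℕ) : ZMod f) * (q : ℂ) ^ (∑ i, (n i : ℕ)) *
        ((qNum q ((∑ i, (n i : ℕ)) : ℝ) : ℝ) : ℂ) ^ (-s)‖) := by
  refine .of_nonneg_of_le (fun _ => norm_nonneg _) (fun n => ?_)
    ((summable_pow_sum_pnat hq0.le hq1 (Fin r)).mul_left ((1 - q)⁻¹ ^ |(-s).re|))
  set m := ∑ i, (n i : ℕ)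
  have hm : 1 ≤ m := (n ⟨0, hr⟩).pos.trans_le
    (single_le_sum (f := fun i => (n i : ℕ)) (fun _ _ => Nat.zero_le _) (mem_univ _))
  have hcast : ((m : ℕ) : ℝ) = ∑ i, ((n i : ℕ) : ℝ) := by simp only [m, Nat.cast_sum]
  rw [← hcast, norm_mul, norm_mul, norm_pow, Complex.norm_real, Real.norm_of_nonneg hq0.le]
  calc ‖χ m‖ * q ^ m * ‖((qNum q m : ℝ) : ℂ) ^ (-s)‖
      ≤ 1 * q ^ m * (1 - q)⁻¹ ^ |(-s).re| := by
        have hχ := χ.norm_le_one m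
        have hcpow := norm_qNum_natCast_cpow_le hq0 hq1 hm (-s)
        gcongr
    _ = (1 - q)⁻¹ ^ |(-s).re| * q ^ m := by ring

/-- For `0 < q < 1`, the family defining the multiple Dirichlet `q`-`L`-series
`L_q^r(s,χ) = Σ_{n₁,…,n_r ≥ 1} χ(n₁+⋯+n_r) q^{n₁+⋯+n_r} [n₁+⋯+n_r]_q^{-s}`
is absolutely summable for every `s ∈ ℂ`. -/
theorem multiple_q_L_series_summable (q : ℝ) (hq0 : 0 < q) (hq1 : q < 1)
    (r f : ℕ) (hr : 1 ≤ r) (hf : 1 ≤ f) (χ : DirichletCharacter ℂ f) (s : ℂ) :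
    Summable (fun n : Fin r → ℕ+ =>
      ‖χ (((∑ i, (n i : ℕ)) : ℕ) : ZMod f) * (q : ℂ) ^ (∑ i, (n i : ℕ)) *
        ((qNum q ((∑ i, (n i : ℕ)) : ℝ) : ℝ) : ℂ) ^ (-s)‖) :=
  multiple_q_L_series_summable_general q hq0 hq1 r f hr χ s
end

section
/- Let 0<q<1 be a real number, let r≥1 and F≥1 be integers, and let a₁,...,a_r be integers with 0 < a_i ≤ F. Then for every complex number s, H_{r,q}(s; a₁,...,a_r | F) = [F]_q^{−s} · ζ_{r,q^F}(s, (a₁+⋯+a_r)/F), where both series converge absolutely. -/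
/-! Writing `mᵢ = aᵢ + F nᵢ` identifies the index set of `H_{r,q}` with `ℕ^r`, and the total
`m₁ + ⋯ + m_r` becomes `A + F N = F (N + A/F)` with `A = a₁ + ⋯ + a_r`, `N = n₁ + ⋯ + n_r`.
The identity `[F]_q [x]_{q^F} = [F x]_q` then splits off the factor `[F]_q^{-s}` term by term.
Both series converge absolutely because `[x]_{q^F}` stays between two positive constants for
`x ≥ A/F > 0`, so the terms are dominated by the geometric series `∑ (q^F)^N` over `ℕ^r`. -/

section QNumber

variable {q : ℝ}

lemma qNum_pos (hq0 : 0 < q) (hq1 : q < 1) {x : ℝ} (hx : 0 < x) : 0 < qNum q x :=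
  div_pos (sub_pos.2 (Real.rpow_lt_one hq0.le hq1 hx)) (sub_pos.2 hq1)

lemma qNum_nonneg (hq0 : 0 ≤ q) (hq1 : q < 1) {x : ℝ} (hx : 0 ≤ x) : 0 ≤ qNum q x :=
  div_nonneg (sub_nonneg.2 (Real.rpow_le_one hq0 hq1.le hx)) (sub_pos.2 hq1).le

lemma qNum_le_qNum (hq0 : 0 < q) (hq1 : q < 1) {x y : ℝ} (hxy : x ≤ y) :
    qNum q x ≤ qNum q y := by
  have := Real.rpow_le_rpow_of_exponent_ge hq0 hq1.le hxy
  unfold qNum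
  gcongr

lemma qNum_le_inv_one_sub (hq0 : 0 ≤ q) (hq1 : q < 1) (x : ℝ) : qNum q x ≤ (1 - q)⁻¹ := by
  rw [qNum, div_eq_mul_inv]
  exact mul_le_of_le_one_left (inv_pos.2 (sub_pos.2 hq1)).le
    (sub_le_self _ (Real.rpow_nonneg hq0 x))

lemma qNum_mul_qNum_pow (hq0 : 0 ≤ q) {F : ℕ} (hqF : q ^ F ≠ 1) (x : ℝ) :
    qNum q F * qNum (q ^ F) x = qNum q (F * x) := by
  have hq1 : 1 - q ≠ 0 := fun h => hqF (by rw [← sub_eq_zero.1 h, one_pow])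
  have hqF' : 1 - q ^ F ≠ 0 := sub_ne_zero.2 (Ne.symm hqF)
  rw [qNum, qNum, qNum, Real.rpow_natCast, ← Real.rpow_natCast q F, ← Real.rpow_mul hq0,
    Real.rpow_natCast]
  field_simp

end QNumber

lemma Real.rpow_le_max_of_mem_Icc {a b y : ℝ} (ha : 0 < a) (hy : y ∈ Set.Icc a b) (t : ℝ) :
    y ^ t ≤ max (a ^ t) (b ^ t) := by
  rcases le_total 0 t with ht | ht
  · exact (Real.rpow_le_rpow (ha.le.trans hy.1) hy.2 ht).trans (le_max_right _ _)
  · exact (Real.rpow_le_rpow_of_nonpos ha hy.1 ht).trans (le_max_left _ _)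

noncomputable def qZetaTerm (q x : ℝ) (s : ℂ) : ℂ :=
  ((q ^ x : ℝ) : ℂ) * ((qNum q x : ℝ) : ℂ) ^ (-s)

section QZetaTerm

variable {q : ℝ} (s : ℂ)

lemma qZetaTerm_natCast (M : ℕ) :
    qZetaTerm q M s = (q : ℂ) ^ M * ((qNum q M : ℝ) : ℂ) ^ (-s) := by
  rw [qZetaTerm, Real.rpow_natCast, Complex.ofReal_pow]

lemma qZetaTerm_mul (hq0 : 0 < q) (hq1 : q < 1) {F : ℕ} (hF : F ≠ 0) {x : ℝ} (hx : 0 ≤ x) :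
    qZetaTerm q (F * x) s = ((qNum q F : ℝ) : ℂ) ^ (-s) * qZetaTerm (q ^ F) x s := by
  have hqF : q ^ F < 1 := pow_lt_one₀ hq0.le hq1 hF
  rw [qZetaTerm, qZetaTerm, ← qNum_mul_qNum_pow hq0.le hqF.ne, Complex.ofReal_mul,
    Complex.mul_cpow_ofReal_nonneg (qNum_nonneg hq0.le hq1 (Nat.cast_nonneg F))
      (qNum_nonneg (pow_nonneg hq0.le F) hqF hx),
    ← Real.rpow_natCast q F, ← Real.rpow_mul hq0.le]
  ring

lemma norm_qZetaTerm_le (hq0 : 0 < q) (hq1 : q < 1) {x₀ x : ℝ} (hx₀ : 0 < x₀) (hx : x₀ ≤ x) :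
    ‖qZetaTerm q x s‖ ≤ max (qNum q x₀ ^ (-s).re) ((1 - q)⁻¹ ^ (-s).re) * q ^ x := by
  have hpos : 0 < qNum q x := qNum_pos hq0 hq1 (hx₀.trans_le hx)
  rw [qZetaTerm, norm_mul, Complex.norm_cpow_eq_rpow_re_of_pos hpos, Complex.norm_real,
    Real.norm_of_nonneg (Real.rpow_nonneg hq0.le x), mul_comm]
  gcongr
  exact Real.rpow_le_max_of_mem_Icc (qNum_pos hq0 hq1 hx₀)
    ⟨qNum_le_qNum hq0 hq1 hx, qNum_le_inv_one_sub hq0.le hq1 x⟩ _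

end QZetaTerm

lemma summable_pow_sum {x : ℝ} (hx0 : 0 ≤ x) (hx1 : x < 1) :
    ∀ r : ℕ, Summable (fun n : Fin r → ℕ => x ^ (∑ i, n i))
  | 0 => Summable.of_finite
  | r + 1 => by
    rw [← (Fin.consEquiv fun _ : Fin (r + 1) => ℕ).summable_iff]
    refine ((summable_geometric_of_lt_one hx0 hx1).mul_of_nonneg (summable_pow_sum hx0 hx1 r)
      (fun n => pow_nonneg hx0 n) (fun n => pow_nonneg hx0 _)).congr fun p => ?_
    simp [Fin.sum_cons, pow_add]

lemma summable_norm_qZetaTerm_sum (s : ℂ) {q c : ℝ} (hq0 : 0 < q) (hq1 : q < 1) (hc : 0 < c)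
    (r : ℕ) : Summable fun n : Fin r → ℕ => ‖qZetaTerm q ((∑ i, n i : ℕ) + c) s‖ := by
  refine .of_nonneg_of_le (fun _ => norm_nonneg _) (fun n => ?_)
    ((summable_pow_sum hq0.le hq1 r).mul_left
      (max (qNum q c ^ (-s).re) ((1 - q)⁻¹ ^ (-s).re) * q ^ c))
  calc ‖qZetaTerm q ((∑ i, n i : ℕ) + c) s‖
      ≤ max (qNum q c ^ (-s).re) ((1 - q)⁻¹ ^ (-s).re) * q ^ ((∑ i, n i : ℕ) + c) :=
        norm_qZetaTerm_le s hq0 hq1 hc (le_add_of_nonneg_left (Nat.cast_nonneg _))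
    _ = _ := by rw [Real.rpow_add hq0, Real.rpow_natCast]; ring

def natEquivPNatModEq {a F : ℕ} (ha : 1 ≤ a ∧ a ≤ F) :
    ℕ ≃ {m : ℕ+ // (m : ℕ) ≡ a [MOD F]} where
  toFun n := ⟨⟨a + F * n, by omega⟩, by simp [Nat.ModEq]⟩
  invFun m := ((m : ℕ) - a) / F
  left_inv n := by
    have : 0 < F := by omega
    simp [Nat.mul_div_cancel_left _ this]
  right_inv m := by
    obtain ⟨⟨m, hm⟩, hma⟩ := m
    have ham : a ≤ m := by
      by_contra! h
      have := Nat.le_of_dvd (by omega) ((Nat.modEq_iff_dvd' h.le).mp hma)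
      omega
    have := Nat.mul_div_cancel' ((Nat.modEq_iff_dvd' ham).mp hma.symm)
    refine Subtype.ext (PNat.eq ?_)
    show a + F * ((m - a) / F) = m
    omega

def piEquivPNatModEq {r F : ℕ} {a : Fin r → ℕ} (ha : ∀ i, 1 ≤ a i ∧ a i ≤ F) :
    (Fin r → ℕ) ≃ {m : Fin r → ℕ+ // ∀ i, (m i : ℕ) ≡ a i [MOD F]} :=
  (Equiv.piCongrRight fun i => natEquivPNatModEq (ha i)).trans Equiv.subtypePiEquivPi.symm

lemma coe_piEquivPNatModEq_apply {r F : ℕ} {a : Fin r → ℕ} (ha : ∀ i, 1 ≤ a i ∧ a i ≤ F)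
    (n : Fin r → ℕ) (i : Fin r) :
    ((piEquivPNatModEq ha n : Fin r → ℕ+) i : ℕ) = a i + F * n i :=
  rfl

lemma sum_piEquivPNatModEq {r F : ℕ} {a : Fin r → ℕ} (ha : ∀ i, 1 ≤ a i ∧ a i ≤ F)
    (n : Fin r → ℕ) :
    ∑ i, ((piEquivPNatModEq ha n : Fin r → ℕ+) i : ℕ) = ∑ i, a i + F * ∑ i, n i := by
  simp only [coe_piEquivPNatModEq_apply, Finset.sum_add_distrib, Finset.mul_sum]

/-- For `0 < q < 1`, integers `r, F ≥ 1` and integers `0 < aᵢ ≤ F`, the partial multiple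
`q`-zeta function satisfies `H_{r,q}(s; a₁,…,a_r | F) = [F]_q^{-s} ζ_{r,q^F}(s, (a₁+⋯+a_r)/F)`
for every `s ∈ ℂ`, both series converging absolutely. -/
theorem partial_multiple_q_zeta_eq (q : ℝ) (hq0 : 0 < q) (hq1 : q < 1)
    (r F : ℕ) (hr : 1 ≤ r) (hF : 1 ≤ F) (a : Fin r → ℕ)
    (ha : ∀ i, 1 ≤ a i ∧ a i ≤ F) (s : ℂ) :
    Summable (fun m : {m : Fin r → ℕ+ // ∀ i, (m i : ℕ) ≡ a i [MOD F]} =>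
      ‖(q : ℂ) ^ (∑ i, ((m : Fin r → ℕ+) i : ℕ)) *
        ((qNum q ((∑ i, ((m : Fin r → ℕ+) i : ℕ)) : ℝ) : ℝ) : ℂ) ^ (-s)‖) ∧
    Summable (fun n : Fin r → ℕ =>
      ‖(((q ^ F) ^ (((∑ i, n i : ℕ) : ℝ) + ((∑ i, a i : ℕ) : ℝ) / (F : ℝ)) : ℝ) : ℂ) *
        ((qNum (q ^ F) (((∑ i, n i : ℕ) : ℝ) + ((∑ i, a i : ℕ) : ℝ) / (F : ℝ)) : ℝ) : ℂ) ^
          (-s)‖) ∧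
    (∑' m : {m : Fin r → ℕ+ // ∀ i, (m i : ℕ) ≡ a i [MOD F]},
      (q : ℂ) ^ (∑ i, ((m : Fin r → ℕ+) i : ℕ)) *
        ((qNum q ((∑ i, ((m : Fin r → ℕ+) i : ℕ)) : ℝ) : ℝ) : ℂ) ^ (-s)) =
    ((qNum q (F : ℝ) : ℝ) : ℂ) ^ (-s) *
      ∑' n : Fin r → ℕ,
        (((q ^ F) ^ (((∑ i, n i : ℕ) : ℝ) + ((∑ i, a i : ℕ) : ℝ) / (F : ℝ)) : ℝ) : ℂ) *
          ((qNum (q ^ F) (((∑ i, n i : ℕ) : ℝ) + ((∑ i, a i : ℕ) : ℝ) / (F : ℝ)) : ℝ) : ℂ) ^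
            (-s) := by
  have hA : (0 : ℝ) < (∑ i, a i : ℕ) / F := by
    have : r ≤ ∑ i, a i := by simpa using Finset.sum_le_sum fun i (_ : i ∈ Finset.univ) => (ha i).1
    have : (0 : ℝ) < (∑ i, a i : ℕ) := by exact_mod_cast hr.trans this
    positivity
  have hterm : ∀ n, qZetaTerm q (∑ i, ((piEquivPNatModEq ha n : Fin r → ℕ+) i : ℕ) : ℕ) s =
      ((qNum q F : ℝ) : ℂ) ^ (-s) *
        qZetaTerm (q ^ F) ((∑ i, n i : ℕ) + (∑ i, a i : ℕ) / F) s := by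
    intro n
    rw [← qZetaTerm_mul s hq0 hq1 (by omega) (by positivity), sum_piEquivPNatModEq]
    congr 1
    push_cast
    field_simp
    ring
  simp_rw [← Nat.cast_sum (R := ℝ), ← qZetaTerm_natCast]
  have hRHS := summable_norm_qZetaTerm_sum s (pow_pos hq0 F) (pow_lt_one₀ hq0.le hq1 (by omega))
    hA r
  refine ⟨?_, hRHS, ?_⟩
  · rw [← (piEquivPNatModEq ha).summable_iff]
    simp only [Function.comp_def, hterm, norm_mul]
    exact hRHS.mul_left _
  · rw [← (piEquivPNatModEq ha).tsum_eq]
    simp_rw [hterm]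
    exact tsum_mul_left
end

section
/- Let 0<q<1 be a real number, let r≥1 be an integer and let x>0 be a real number. Then for every t ∈ ℂ the series Σ_{n₁,...,n_r≥0} q^{x+n₁+⋯+n_r} e^{[x+n₁+⋯+n_r]_q t} converges absolutely, and the function G_{r,q,x}(t) = (−t)^r Σ_{n₁,...,n_r≥0} q^{x+n₁+⋯+n_r} e^{[x+n₁+⋯+n_r]_q t} is complex-analytic (entire) on all of ℂ. -/
/-- The generating function `G_{r,q,x}(t) = (-t)^r Σ_{n₁,…,n_r ≥ 0} q^{x+n₁+⋯+n_r}
e^{[x+n₁+⋯+n_r]_q t}` of the multiple `q`-Bernoulli polynomials. -/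
noncomputable def multipleQBernoulliGen (q : ℝ) (r : ℕ) (x : ℝ) (t : ℂ) : ℂ :=
  (-t) ^ r * ∑' n : Fin r → ℕ,
    ((q ^ (x + ((∑ i, n i : ℕ) : ℝ)) : ℝ) : ℂ) *
      Complex.exp (((qNum q (x + ((∑ i, n i : ℕ) : ℝ)) : ℝ) : ℂ) * t)

/-! For `0 ≤ x`, the term of index `n` has modulus at most `q^x e^{R/(1-q)} q^{n₁+⋯+n_r}` on the
disc `|t| ≤ R`, because `|[y]_q| ≤ 1/(1-q)` for `y ≥ 0`. The multi-geometric series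
`Σ q^{n₁+⋯+n_r}` converges, so the series converges absolutely and locally uniformly, and its
sum is entire by Weierstrass' theorem. -/

theorem Complex.differentiable_tsum_of_norm_le {ι : Type*} {F : ι → ℂ → ℂ} {u : ℝ → ι → ℝ}
    (hF : ∀ i, Differentiable ℂ (F i)) (hu : ∀ R, Summable (u R))
    (hF_le : ∀ R i w, ‖w‖ ≤ R → ‖F i w‖ ≤ u R i) :
    Differentiable ℂ fun w => ∑' i, F i w := by
  intro z
  have hball : DifferentiableOn ℂ (fun w => ∑' i, F i w) (Metric.ball 0 (‖z‖ + 1)) :=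
    differentiableOn_tsum_of_summable_norm (hu (‖z‖ + 1)) (fun i => (hF i).differentiableOn)
      Metric.isOpen_ball fun i w hw => hF_le _ i w (mem_ball_zero_iff.1 hw).le
  exact hball.differentiableAt (Metric.isOpen_ball.mem_nhds (by simp))

theorem summable_pow_sum_fin {q : ℝ} (hq0 : 0 ≤ q) (hq1 : q < 1) (r : ℕ) :
    Summable fun n : Fin r → ℕ => q ^ ∑ i, n i := by
  induction r with
  | zero => exact Summable.of_finite
  | succ r ih =>
    rw [← (Fin.consEquiv fun _ : Fin (r + 1) => ℕ).summable_iff]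
    refine ((summable_geometric_of_lt_one hq0 hq1).mul_of_nonneg ih (fun n => by positivity)
      (fun n => by positivity)).congr fun p => ?_
    simp [Fin.sum_cons, pow_add]

theorem abs_qNum_le {q y : ℝ} (hq0 : 0 < q) (hq1 : q < 1) (hy : 0 ≤ y) :
    |qNum q y| ≤ (1 - q)⁻¹ := by
  have hqy : 0 < q ^ y := Real.rpow_pos_of_pos hq0 y
  have hqy1 : q ^ y ≤ 1 := Real.rpow_le_one hq0.le hq1.le hy
  rw [qNum, abs_div, abs_of_nonneg (sub_nonneg.2 hqy1), abs_of_pos (sub_pos.2 hq1), div_eq_mul_inv]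
  exact mul_le_of_le_one_left (by simp [hq1.le]) (by linarith)

theorem norm_rpow_mul_exp_qNum_le {q x : ℝ} (hq0 : 0 < q) (hq1 : q < 1) (hx : 0 ≤ x) (m : ℕ)
    {t : ℂ} {R : ℝ} (ht : ‖t‖ ≤ R) :
    ‖((q ^ (x + m) : ℝ) : ℂ) * Complex.exp ((qNum q (x + m) : ℂ) * t)‖ ≤
      q ^ x * Real.exp (R / (1 - q)) * q ^ m := by
  have hq : q ^ (x + m) = q ^ x * q ^ m := by rw [Real.rpow_add hq0, Real.rpow_natCast]
  have hexp : ‖Complex.exp ((qNum q (x + m) : ℂ) * t)‖ ≤ Real.exp (R / (1 - q)) := by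
    refine (Complex.norm_exp_le_exp_norm _).trans (Real.exp_le_exp.2 ?_)
    rw [norm_mul, Complex.norm_real, Real.norm_eq_abs, div_eq_inv_mul]
    exact mul_le_mul (abs_qNum_le hq0 hq1 (by positivity)) ht (norm_nonneg t) (by simp [hq1.le])
  rw [norm_mul, Complex.norm_real, Real.norm_of_nonneg (by positivity), hq]
  calc q ^ x * q ^ m * ‖Complex.exp ((qNum q (x + m) : ℂ) * t)‖
      ≤ q ^ x * q ^ m * Real.exp (R / (1 - q)) := by gcongr
    _ = q ^ x * Real.exp (R / (1 - q)) * q ^ m := by ring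

theorem multipleQBernoulliGen_entire_general (q : ℝ) (hq0 : 0 < q) (hq1 : q < 1)
    (r : ℕ) (x : ℝ) (hx : 0 < x) :
    (∀ t : ℂ, Summable (fun n : Fin r → ℕ =>
      ‖((q ^ (x + ((∑ i, n i : ℕ) : ℝ)) : ℝ) : ℂ) *
        Complex.exp (((qNum q (x + ((∑ i, n i : ℕ) : ℝ)) : ℝ) : ℂ) * t)‖)) ∧
    AnalyticOnNhd ℂ (multipleQBernoulliGen q r x) Set.univ := by
  have hmajorant : ∀ R : ℝ, Summable fun n : Fin r → ℕ =>
      q ^ x * Real.exp (R / (1 - q)) * q ^ ∑ i, n i :=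
    fun R => (summable_pow_sum_fin hq0.le hq1 r).mul_left _
  have hbound := fun (R : ℝ) (n : Fin r → ℕ) (t : ℂ) (ht : ‖t‖ ≤ R) =>
    norm_rpow_mul_exp_qNum_le hq0 hq1 hx.le (∑ i, n i) ht
  refine ⟨fun t => (hmajorant ‖t‖).of_nonneg_of_le (fun n => norm_nonneg _)
    fun n => hbound _ n t le_rfl, ?_⟩
  rw [Complex.analyticOnNhd_univ_iff_differentiable]
  refine (differentiable_neg.pow r).mul
    (Complex.differentiable_tsum_of_norm_le (fun n => ?_) hmajorant hbound)
  fun_prop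

/-- For `0 < q < 1`, `r ≥ 1` and real `x > 0`, the series
`Σ_{n₁,…,n_r ≥ 0} q^{x+n₁+⋯+n_r} e^{[x+n₁+⋯+n_r]_q t}` converges absolutely for every
`t ∈ ℂ`, and `G_{r,q,x}` is entire. -/
theorem multipleQBernoulliGen_entire (q : ℝ) (hq0 : 0 < q) (hq1 : q < 1)
    (r : ℕ) (hr : 1 ≤ r) (x : ℝ) (hx : 0 < x) :
    (∀ t : ℂ, Summable (fun n : Fin r → ℕ =>
      ‖((q ^ (x + ((∑ i, n i : ℕ) : ℝ)) : ℝ) : ℂ) *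
        Complex.exp (((qNum q (x + ((∑ i, n i : ℕ) : ℝ)) : ℝ) : ℂ) * t)‖)) ∧
    AnalyticOnNhd ℂ (multipleQBernoulliGen q r x) Set.univ :=
  multipleQBernoulliGen_entire_general q hq0 hq1 r x hx
end

section
/- Let 0<q<1 be a real number, let f≥1 be an integer, let χ be a nontrivial Dirichlet character modulo f with values in ℂ, and let n≥0 be an integer. Then β_{n,χ,q} = [f]_q^{n−1} · Σ_{a=1}^{f} χ(a) · β_{n,q^f}(a/f). -/
/-- The generating function `F_q(t,x) = ((q-1)/log q) e^{t/(1-q)} -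
t Σ_{m ≥ 0} q^{m+x} e^{[m+x]_q t}` of the `q`-Bernoulli polynomials `β_{n,q}(x)`. -/
noncomputable def qBernoulliPolyGen (q x : ℝ) (t : ℂ) : ℂ :=
  (((q - 1) / Real.log q : ℝ) : ℂ) * Complex.exp (t / (1 - (q : ℂ))) -
    t * ∑' m : ℕ, ((q ^ ((m : ℝ) + x) : ℝ) : ℂ) *
      Complex.exp (((qNum q ((m : ℝ) + x) : ℝ) : ℂ) * t)

/-- The `q`-Bernoulli polynomial `β_{n,q}(x)`, the `n`-th derivative of `F_q(·,x)` at `0`. -/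
noncomputable def qBernoulliPoly (q : ℝ) (n : ℕ) (x : ℝ) : ℂ :=
  iteratedDeriv n (qBernoulliPolyGen q x) 0

/-- The generating function `F_{q,χ}(t) = -t Σ_{a=1}^{f} χ(a) Σ_{m ≥ 0} q^{fm+a}
e^{[fm+a]_q t}` of the generalized `q`-Bernoulli numbers attached to `χ`. -/
noncomputable def genQBernoulliGen (q : ℝ) (f : ℕ) (χ : DirichletCharacter ℂ f)
    (t : ℂ) : ℂ :=
  -t * ∑ a ∈ Finset.Icc 1 f, χ ((a : ℕ) : ZMod f) *
    ∑' m : ℕ, (q : ℂ) ^ (f * m + a) *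
      Complex.exp (((qNum q ((f * m + a : ℕ) : ℝ) : ℝ) : ℂ) * t)

/-- The generalized `q`-Bernoulli number `β_{n,χ,q}`, the `n`-th derivative of `F_{q,χ}`
at `t = 0`. -/
noncomputable def genQBernoulli (q : ℝ) (f : ℕ) (χ : DirichletCharacter ℂ f) (n : ℕ) : ℂ :=
  iteratedDeriv n (genQBernoulliGen q f χ) 0

open Complex Finset

lemma ZMod.sum_range_natCast {M : Type*} [AddCommMonoid M] {f : ℕ} [NeZero f] (g : ZMod f → M) :
    ∑ k ∈ range f, g k = ∑ b, g b := by
  obtain ⟨k, rfl⟩ : ∃ k, f = k + 1 := Nat.exists_eq_succ_of_ne_zero (NeZero.ne f)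
  rw [← Fin.sum_univ_eq_sum_range (fun i => g i)]
  exact Fintype.sum_congr _ _ fun i => congrArg g (Fin.cast_val_eq_self i)

lemma ZMod.sum_Icc_one_natCast {M : Type*} [AddCommMonoid M] {f : ℕ} [NeZero f]
    (g : ZMod f → M) : ∑ a ∈ Icc 1 f, g a = ∑ b, g b := by
  rw [← Finset.Ico_add_one_right_eq_Icc, sum_Ico_eq_sum_range, Nat.add_sub_cancel]
  push_cast
  rw [ZMod.sum_range_natCast fun b => g (1 + b)]
  exact Fintype.sum_equiv (Equiv.addLeft 1) _ _ fun _ => rfl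

lemma differentiable_tsum_mul_cexp {ι : Type*} {A B : ι → ℂ} {C : ℝ}
    (hA : Summable fun i => ‖A i‖) (hB : ∀ i, ‖B i‖ ≤ C) :
    Differentiable ℂ fun t => ∑' i, A i * cexp (B i * t) := by
  intro t
  have hbound : ∀ i, ∀ w ∈ Metric.ball (0 : ℂ) (‖t‖ + 1),
      ‖A i * cexp (B i * w)‖ ≤ ‖A i‖ * Real.exp (C * (‖t‖ + 1)) := by
    intro i w hw
    rw [mem_ball_zero_iff] at hw
    rw [norm_mul, Complex.norm_exp]
    gcongr
    calc (B i * w).re ≤ ‖B i * w‖ := re_le_norm _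
      _ = ‖B i‖ * ‖w‖ := norm_mul _ _
      _ ≤ C * (‖t‖ + 1) := mul_le_mul (hB i) hw.le (norm_nonneg _) ((norm_nonneg _).trans (hB i))
  refine (differentiableOn_tsum_of_summable_norm (hA.mul_right _)
    (fun i => (by fun_prop : Differentiable ℂ _).differentiableOn) Metric.isOpen_ball hbound
    ).differentiableAt (Metric.isOpen_ball.mem_nhds (by simp))

lemma qNum_mul {q : ℝ} (hq : 0 ≤ q) {x : ℝ} (hx : q ^ x ≠ 1) (y : ℝ) :
    qNum q (x * y) = qNum q x * qNum (q ^ x) y := by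
  have : 1 - q ^ x ≠ 0 := sub_ne_zero.2 hx.symm
  rw [qNum, qNum, qNum, ← Real.rpow_mul hq]
  field_simp

lemma qNum_natCast_ne_zero {q : ℝ} {f : ℕ} (hqf : q ^ f ≠ 1) : qNum q f ≠ 0 := by
  have hq : q ≠ 1 := by rintro rfl; simp at hqf
  rw [qNum, Real.rpow_natCast]
  exact div_ne_zero (sub_ne_zero.2 hqf.symm) (sub_ne_zero.2 hq.symm)

lemma abs_qNum_add_le {q : ℝ} (hq0 : 0 < q) (hq1 : q < 1) (x : ℝ) {y : ℝ} (hy : 0 ≤ y) :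
    |qNum q (y + x)| ≤ (1 + q ^ x) / (1 - q) := by
  have hpow : q ^ (y + x) ≤ q ^ x := by
    rw [Real.rpow_add hq0]
    exact mul_le_of_le_one_left (by positivity) (Real.rpow_le_one hq0.le hq1.le hy)
  rw [qNum, abs_div, abs_of_pos (sub_pos.2 hq1)]
  gcongr
  exact (abs_sub _ _).trans (by rw [abs_one, abs_of_pos (by positivity)]; linarith)

lemma contDiff_qBernoulliPolyGen {q : ℝ} (hq0 : 0 < q) (hq1 : q < 1) (x : ℝ) :
    ContDiff ℂ ⊤ (qBernoulliPolyGen q x) := by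
  have hsum : Summable fun m : ℕ => ‖((q ^ ((m : ℝ) + x) : ℝ) : ℂ)‖ := by
    simp_rw [Complex.norm_real, Real.norm_eq_abs, Real.rpow_add hq0, Real.rpow_natCast]
    exact ((summable_geometric_of_lt_one hq0.le hq1).mul_right _).abs
  have hbound (m : ℕ) : ‖((qNum q ((m : ℝ) + x) : ℝ) : ℂ)‖ ≤ (1 + q ^ x) / (1 - q) := by
    rw [Complex.norm_real, Real.norm_eq_abs]
    exact abs_qNum_add_le hq0 hq1 x m.cast_nonneg
  refine Differentiable.contDiff ?_
  unfold qBernoulliPolyGen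
  have := differentiable_tsum_mul_cexp hsum hbound
  fun_prop

lemma tsum_qBernoulliPolyGen_series_rescale {q : ℝ} (hq : 0 ≤ q) {f : ℕ} (hqf : q ^ f ≠ 1)
    (a : ℕ) (t : ℂ) :
    ∑' m : ℕ, (((q ^ f) ^ ((m : ℝ) + a / f) : ℝ) : ℂ) *
        cexp ((qNum (q ^ f) ((m : ℝ) + a / f) : ℂ) * ((qNum q f : ℂ) * t)) =
      ∑' m : ℕ, (q : ℂ) ^ (f * m + a) * cexp ((qNum q ((f * m + a : ℕ) : ℝ) : ℂ) * t) := by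
  have hf : (f : ℝ) ≠ 0 := by rintro h; simp_all
  have hexp (m : ℕ) : (f : ℝ) * ((m : ℝ) + a / f) = ((f * m + a : ℕ) : ℝ) := by
    push_cast; field_simp
  refine tsum_congr fun m => ?_
  rw [← Real.rpow_natCast q f] at hqf ⊢
  rw [← Real.rpow_mul hq, hexp, Real.rpow_natCast, ← mul_assoc, ← Complex.ofReal_mul,
    mul_comm (qNum _ _), ← qNum_mul hq hqf, hexp]
  push_cast
  rfl

lemma genQBernoulliGen_eq_sum {q : ℝ} (hq : 0 ≤ q) {f : ℕ} (hqf : q ^ f ≠ 1)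
    {χ : DirichletCharacter ℂ f} (hχ : χ ≠ 1) (t : ℂ) :
    genQBernoulliGen q f χ t = (qNum q f : ℂ)⁻¹ * ∑ a ∈ Icc 1 f,
      χ a * qBernoulliPolyGen (q ^ f) (a / f) ((qNum q f : ℂ) * t) := by
  have : NeZero f := ⟨by rintro rfl; simp_all⟩
  have hc : (qNum q f : ℂ) ≠ 0 := Complex.ofReal_ne_zero.2 (qNum_natCast_ne_zero hqf)
  have hχsum : ∑ a ∈ Icc 1 f, χ a = 0 :=
    (ZMod.sum_Icc_one_natCast χ).trans (MulChar.sum_eq_zero_of_ne_one hχ)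
  simp only [qBernoulliPolyGen, tsum_qBernoulliPolyGen_series_rescale hq hqf, mul_sub,
    sum_sub_distrib, ← sum_mul, hχsum, genQBernoulliGen]
  rw [zero_mul, mul_zero, zero_sub]
  simp only [mul_left_comm _ ((qNum q f : ℂ) * t), ← mul_sum]
  field_simp

/-- For `0 < q < 1` and a nontrivial Dirichlet character `χ` mod `f`,
`β_{n,χ,q} = [f]_q^{n-1} Σ_{a=1}^{f} χ(a) β_{n,q^f}(a/f)`. -/
theorem genQBernoulli_eq (q : ℝ) (hq0 : 0 < q) (hq1 : q < 1)
    (f : ℕ) (hf : 1 ≤ f) (χ : DirichletCharacter ℂ f) (hχ : χ ≠ 1) (n : ℕ) :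
    genQBernoulli q f χ n =
    ((qNum q (f : ℝ) : ℝ) : ℂ) ^ ((n : ℤ) - 1) *
      ∑ a ∈ Finset.Icc 1 f, χ ((a : ℕ) : ZMod f) *
        qBernoulliPoly (q ^ f) n ((a : ℝ) / (f : ℝ)) := by
  have hqf1 : q ^ f < 1 := pow_lt_one₀ hq0.le hq1 (by omega)
  set c : ℂ := (qNum q f : ℂ)
  have hc : c ≠ 0 := Complex.ofReal_ne_zero.2 (qNum_natCast_ne_zero hqf1.ne)
  have hF (a : ℕ) : ContDiff ℂ n fun s => χ a * qBernoulliPolyGen (q ^ f) (a / f) s :=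
    contDiff_const.mul ((contDiff_qBernoulliPolyGen (pow_pos hq0 f) hqf1 _).of_le le_top)
  calc genQBernoulli q f χ n
      = iteratedDeriv n (fun t => c⁻¹ * ∑ a ∈ Icc 1 f,
          χ a * qBernoulliPolyGen (q ^ f) (a / f) (c * t)) 0 := by
        rw [genQBernoulli, funext (genQBernoulliGen_eq_sum hq0.le hqf1.ne hχ)]
    _ = c ^ n * (c⁻¹ * ∑ a ∈ Icc 1 f, χ a * qBernoulliPoly (q ^ f) n (a / f)) := by
        rw [iteratedDeriv_const_mul_field,
          iteratedDeriv_comp_const_mul (ContDiff.sum fun a _ => hF a)]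
        beta_reduce
        rw [mul_zero, iteratedDeriv_fun_sum fun a _ => (hF a).contDiffAt]
        simp only [iteratedDeriv_const_mul_field, qBernoulliPoly]
        ring
    _ = c ^ ((n : ℤ) - 1) * ∑ a ∈ Icc 1 f, χ a * qBernoulliPoly (q ^ f) n (a / f) := by
        rw [zpow_sub₀ hc, zpow_natCast, zpow_one, div_eq_mul_inv, mul_assoc]
end

section
/- Let 0<q<1 be a real number, let x>0 be a real number and let n≥0 be an integer. Then β_{n,q}(x) = (1/(1−q))^n · ( (q−1)/log q + Σ_{i=1}^{n} C(n,i) (−1)^i q^{xi} · i/[i]_q ), where C(n,i) is the binomial coefficient; that is, the q-Bernoulli polynomial admits this closed-form expression, the i=0 term of the sum Σ_{i=0}^n C(n,i)(−1)^i q^{xi} i/[i]_q being interpreted as (q−1)/log q. -/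
/-!
Expanding `e^{t/(1-q)}` and each `e^{[m+x]_q t}` in powers of `t` (the double series converges
absolutely because `q^{m+x}` decays geometrically while `[m+x]_q` stays bounded) shows that
`β_{n,q}(x) = (1-q)^{-n} (q-1)/log q - n S_{n-1}` with `S_k = Σ_m q^{m+x} [m+x]_q^k`.
Expanding `[m+x]_q^k = (1-q)^{-k} (1 - q^{m+x})^k` binomially turns `S_k` into finitely many
geometric series in `m`, and `n C(n-1, j) = (j+1) C(n, j+1)` gives the closed form.
-/

open Filter Topology Nat

theorem iteratedDeriv_eq_of_hasSum_mul_pow_div_factorial {𝕜 : Type*}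
    [NontriviallyNormedField 𝕜] [CompleteSpace 𝕜] [CharZero 𝕜] {f : 𝕜 → 𝕜} {e : ℕ → 𝕜} {x : 𝕜}
    (h : ∀ᶠ z in 𝓝 0, HasSum (fun k => e k * z ^ k / k !) (f (x + z))) (n : ℕ) :
    iteratedDeriv n f x = e n := by
  have hp : HasFPowerSeriesAt f (FormalMultilinearSeries.ofScalars 𝕜 fun k => e k / k !) x := by
    rw [hasFPowerSeriesAt_iff]
    filter_upwards [h] with z hz
    simpa only [FormalMultilinearSeries.coeff_ofScalars, smul_eq_mul, mul_div_assoc', mul_comm]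
      using hz
  have hcoeff := congrArg (·.coeff n)
    (hp.eq_formalMultilinearSeries hp.analyticAt.hasFPowerSeriesAt)
  simp only [FormalMultilinearSeries.coeff_ofScalars] at hcoeff
  rwa [div_left_inj' (by exact_mod_cast n.factorial_ne_zero), eq_comm] at hcoeff

/-- At `k = 0` the truncated `k - 1` is harmless because of the factor `k`. -/
theorem HasSum.natCast_mul_pred_mul_pow_div_factorial {𝕜 : Type*} [NormedField 𝕜] [CharZero 𝕜]
    {e : ℕ → 𝕜} {z s : 𝕜} (h : HasSum (fun k => e k * z ^ k / k !) s) :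
    HasSum (fun k => k * e (k - 1) * z ^ k / k !) (z * s) := by
  refine (hasSum_nat_add_iff' 1).mp ?_
  rw [Finset.sum_range_one, CharP.cast_eq_zero, zero_mul, zero_mul, zero_div, sub_zero]
  refine (h.mul_left z).congr_fun fun k => ?_
  rw [Nat.add_sub_cancel, Nat.factorial_succ, Nat.cast_mul]
  field_simp
  ring

theorem hasSum_tsum_mul_pow_mul_pow_div_factorial {ι : Type*} {w a : ι → ℂ}
    (hw : Summable fun i => ‖w i‖) {C : ℝ} (ha : ∀ i, ‖a i‖ ≤ C) (z : ℂ) :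
    HasSum (fun k => (∑' i, w i * a i ^ k) * z ^ k / k !)
      (∑' i, w i * Complex.exp (a i * z)) := by
  set g : ι × ℕ → ℂ := fun p => w p.1 * ((a p.1 * z) ^ p.2 / p.2 !)
  have hg : Summable g := by
    refine Summable.of_norm_bounded (hw.mul_of_nonneg
      (Real.summable_pow_div_factorial (max C 0 * ‖z‖)) (fun _ => norm_nonneg _)
        (fun k => by positivity)) fun p => ?_
    simp only [g, norm_mul, norm_div, norm_pow, Complex.norm_natCast]
    gcongr
    exact le_max_of_le_left (ha _)
  have hrow : HasSum (fun i => w i * Complex.exp (a i * z)) (∑' p, g p) := by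
    refine hg.hasSum.prod_fiberwise fun i => ?_
    rw [Complex.exp_eq_exp_ℂ]
    exact (NormedSpace.expSeries_div_hasSum_exp (a i * z)).mul_left (w i)
  rw [hrow.tsum_eq]
  refine ((Equiv.prodComm ℕ ι).hasSum_iff.mpr hg.hasSum).prod_fiberwise fun k => ?_
  have hcol : Summable fun i => w i * a i ^ k := by
    refine Summable.of_norm_bounded (hw.mul_right (max C 0 ^ k)) fun i => ?_
    rw [norm_mul, norm_pow]
    gcongr
    exact le_max_of_le_left (ha _)
  rw [mul_div_assoc]
  refine (hcol.hasSum.mul_right (z ^ k / k !)).congr_fun fun i => ?_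
  simp only [g, Function.comp_apply, Equiv.prodComm_apply, Prod.fst_swap, Prod.snd_swap]
  ring

noncomputable def qMoment (q x : ℝ) (k : ℕ) : ℝ :=
  ∑' m : ℕ, q ^ ((m : ℝ) + x) * qNum q ((m : ℝ) + x) ^ k

section

variable {q : ℝ} (hq0 : 0 < q) (hq1 : q < 1)
include hq0 hq1

theorem abs_qNum_natCast_add_le (x : ℝ) (m : ℕ) :
    |qNum q ((m : ℝ) + x)| ≤ (1 + q ^ x) / (1 - q) := by
  have hqm : q ^ ((m : ℝ) + x) ≤ q ^ x :=
    Real.rpow_le_rpow_of_exponent_ge hq0 hq1.le (by linarith [m.cast_nonneg (α := ℝ)])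
  rw [qNum, abs_div, abs_of_pos (sub_pos.2 hq1)]
  gcongr
  calc |1 - q ^ ((m : ℝ) + x)| ≤ |1| + |q ^ ((m : ℝ) + x)| := abs_sub _ _
    _ ≤ 1 + q ^ x := by rw [abs_one, abs_of_pos (by positivity)]; linarith

theorem hasSum_rpow_natCast_add_pow (x : ℝ) {s : ℕ} (hs : s ≠ 0) :
    HasSum (fun m : ℕ => (q ^ ((m : ℝ) + x)) ^ s) (q ^ (x * s) / ((1 - q) * qNum q s)) := by
  have hqs : q ^ s < 1 := pow_lt_one₀ hq0.le hq1 hs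
  rw [qNum, mul_div_cancel₀ _ (sub_pos.2 hq1).ne', Real.rpow_natCast, div_eq_mul_inv]
  refine ((hasSum_geometric_of_lt_one (by positivity) hqs).mul_left (q ^ (x * s))).congr_fun
    fun m => ?_
  rw [← Real.rpow_natCast, ← Real.rpow_mul hq0.le, ← Real.rpow_natCast (q ^ s),
    ← Real.rpow_natCast q, ← Real.rpow_mul hq0.le, ← Real.rpow_add hq0]
  ring_nf

theorem hasSum_rpow_natCast_add_mul_qNum_pow (x : ℝ) (k : ℕ) :
    HasSum (fun m : ℕ => q ^ ((m : ℝ) + x) * qNum q ((m : ℝ) + x) ^ k)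
      (∑ j ∈ Finset.range (k + 1), (k.choose j : ℝ) * (-1) ^ j / (1 - q) ^ k *
        (q ^ (x * (j + 1 : ℕ)) / ((1 - q) * qNum q (j + 1 : ℕ)))) := by
  refine (hasSum_sum fun j _ => (hasSum_rpow_natCast_add_pow hq0 hq1 x j.succ_ne_zero).mul_left
    ((k.choose j : ℝ) * (-1) ^ j / (1 - q) ^ k)).congr_fun fun m => ?_
  rw [qNum, div_pow, sub_eq_neg_add, add_pow, Finset.sum_div, Finset.mul_sum]
  refine Finset.sum_congr rfl fun j _ => ?_
  rw [one_pow, mul_one, neg_pow, pow_succ]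
  ring

theorem natCast_mul_qMoment_pred (x : ℝ) (n : ℕ) :
    (n : ℝ) * qMoment q x (n - 1) = -(1 / (1 - q)) ^ n *
      ∑ i ∈ Finset.Icc 1 n, (n.choose i : ℝ) * (-1) ^ i * q ^ (x * i) * i / qNum q i := by
  cases n with
  | zero => simp
  | succ k =>
    rw [Nat.add_sub_cancel, qMoment, (hasSum_rpow_natCast_add_mul_qNum_pow hq0 hq1 x k).tsum_eq,
      ← Finset.Ico_add_one_right_eq_Icc, Finset.sum_Ico_eq_sum_range, Nat.add_sub_cancel,
      Finset.mul_sum, Finset.mul_sum]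
    refine Finset.sum_congr rfl fun j _ => ?_
    have hchoose : ((k + 1 : ℕ) : ℝ) * k.choose j = (k + 1).choose (j + 1) * (j + 1 : ℕ) := by
      exact_mod_cast Nat.add_one_mul_choose_eq k j
    rw [add_comm 1 j]
    -- as an atom `1 - q` lets `ring` split `((1 - q) * [j+1]_q)⁻¹`
    generalize 1 - q = c
    linear_combination ((-1) ^ j * q ^ (x * (j + 1 : ℕ)) / (c ^ (k + 1) * qNum q (j + 1 : ℕ)))
      * hchoose

theorem hasSum_qBernoulliPolyGen (x : ℝ) (z : ℂ) :
    HasSum (fun k => ((((q - 1) / Real.log q : ℝ) : ℂ) * (1 / (1 - (q : ℂ))) ^ k -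
      k * qMoment q x (k - 1)) * z ^ k / k !) (qBernoulliPolyGen q x z) := by
  have hexp := (NormedSpace.expSeries_div_hasSum_exp (1 / (1 - (q : ℂ)) * z)).mul_left
    (((q - 1) / Real.log q : ℝ) : ℂ)
  have hw : Summable fun m : ℕ => ‖((q ^ ((m : ℝ) + x) : ℝ) : ℂ)‖ := by
    simpa [abs_of_pos (Real.rpow_pos_of_pos hq0 _)] using
      (hasSum_rpow_natCast_add_pow hq0 hq1 x one_ne_zero).summable
  have hseries := (hasSum_tsum_mul_pow_mul_pow_div_factorial hw
    (fun m => (Complex.norm_real _).trans_le (abs_qNum_natCast_add_le hq0 hq1 x m))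
    z).natCast_mul_pred_mul_pow_div_factorial
  rw [← Complex.exp_eq_exp_ℂ, one_div_mul_eq_div] at hexp
  rw [qBernoulliPolyGen]
  refine (hexp.sub hseries).congr_fun fun k => ?_
  rw [qMoment, Complex.ofReal_tsum]
  push_cast
  ring

end

theorem qBernoulliPoly_closed_form_general (q : ℝ) (hq0 : 0 < q) (hq1 : q < 1)
    (x : ℝ) (n : ℕ) :
    qBernoulliPoly q n x =
    (1 / (1 - (q : ℂ))) ^ n *
      ((((q - 1) / Real.log q : ℝ) : ℂ) +
        ∑ i ∈ Finset.Icc 1 n,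
          (n.choose i : ℂ) * (-1 : ℂ) ^ i * ((q ^ (x * (i : ℝ)) : ℝ) : ℂ) *
            (i : ℂ) / ((qNum q (i : ℝ) : ℝ) : ℂ)) := by
  rw [qBernoulliPoly, iteratedDeriv_eq_of_hasSum_mul_pow_div_factorial
    (.of_forall fun z => by simpa using hasSum_qBernoulliPolyGen hq0 hq1 x z)]
  have hmoment := congrArg ((↑) : ℝ → ℂ) (natCast_mul_qMoment_pred hq0 hq1 x n)
  push_cast at hmoment
  rw [hmoment]
  push_cast
  ring

/-- For `0 < q < 1`, real `x > 0` and `n ≥ 0`, the `q`-Bernoulli polynomial has the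
closed form `β_{n,q}(x) = (1/(1-q))^n ((q-1)/log q + Σ_{i=1}^{n} C(n,i)(-1)^i q^{xi}
i/[i]_q)`. -/
theorem qBernoulliPoly_closed_form (q : ℝ) (hq0 : 0 < q) (hq1 : q < 1)
    (x : ℝ) (hx : 0 < x) (n : ℕ) :
    qBernoulliPoly q n x =
    (1 / (1 - (q : ℂ))) ^ n *
      ((((q - 1) / Real.log q : ℝ) : ℂ) +
        ∑ i ∈ Finset.Icc 1 n,
          (n.choose i : ℂ) * (-1 : ℂ) ^ i * ((q ^ (x * (i : ℝ)) : ℝ) : ℂ) *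
            (i : ℂ) / ((qNum q (i : ℝ) : ℝ) : ℂ)) :=
  qBernoulliPoly_closed_form_general q hq0 hq1 x n
end
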